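/- arXiv:math/0510640 — 4 statements merged into one kernel-verified Lean document; each statement's English description precedes it below -/
import Mathlib

section
/- Let Γ₁ ⊆ ℕ be a set of naturals (representing the instances R(i,0,i+1) present among hypotheses), and define derivability D ⊆ ℕ³ as the smallest relation such that: (i) D(i,0,i+1) whenever i ∈ Γ₁, and (ii) if D(y,x,z) and D(z,x,z₁) then D(y,x+1,z₁). If D(n,m,l) holds, then l = n + 2^m and {i : n ≤ i < n + 2^m} ⊆ Γ₁; in particular |Γ₁| ≥ 2^m. -/
/-- Derivability from the `Hyp₁`-instances indexed by `Γ₁` and all instances of `Hyp₂`: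
the smallest ternary relation with `D Γ₁ i 0 (i+1)` for `i ∈ Γ₁`, closed under
`D Γ₁ y x z → D Γ₁ z x z₁ → D Γ₁ y (x+1) z₁`. -/
inductive D (Γ₁ : Finset ℕ) : ℕ → ℕ → ℕ → Prop
  | base {i : ℕ} : i ∈ Γ₁ → D Γ₁ i 0 (i + 1)
  | step {y x z z₁ : ℕ} : D Γ₁ y x z → D Γ₁ z x z₁ → D Γ₁ y (x + 1) z₁

/-- If `R(n,m,l)` is derivable from the `Hyp₁`-instances indexed by `Γ₁`, then
`l = n + 2^m`, all base instances `R(i,0,i+1)` for `n ≤ i < n + 2^m` must be present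
in `Γ₁`, and in particular `|Γ₁| ≥ 2^m`. -/
theorem derivation_lower_bound {Γ₁ : Finset ℕ} {n m l : ℕ} (h : D Γ₁ n m l) :
    l = n + 2 ^ m ∧ Finset.Ico n (n + 2 ^ m) ⊆ Γ₁ ∧ 2 ^ m ≤ Γ₁.card := by
  have key : l = n + 2 ^ m ∧ Finset.Ico n (n + 2 ^ m) ⊆ Γ₁ := by
    induction h with
    | base hi =>
      refine ⟨by ring, ?_⟩
      intro j hj
      simp at hj
      subst hj; exact hi
    | @step y x z z₁ h1 h2 ih1 ih2 =>
      obtain ⟨e1, s1⟩ := ih1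
      obtain ⟨e2, s2⟩ := ih2
      subst e1; subst e2
      refine ⟨by ring_nf, ?_⟩
      intro j hj
      simp only [Finset.mem_Ico] at hj
      rcases lt_or_ge j (y + 2 ^ x) with h | h
      · exact s1 (Finset.mem_Ico.mpr ⟨hj.1, h⟩)
      · apply s2
        simp only [Finset.mem_Ico]
        have : 2 ^ (x + 1) = 2 ^ x + 2 ^ x := by ring
        omega
  refine ⟨key.1, key.2, ?_⟩
  calc 2 ^ m = (Finset.Ico n (n + 2 ^ m)).card := by simp
    _ ≤ Γ₁.card := Finset.card_le_card key.2
end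

section
/- Define 2_k^1 by 2_0^1 = 1 and 2_{k+1}^1 = 2^(2_k^1). Let Γ₁ ⊆ ℕ and let D be the smallest ternary relation on ℕ with D(i,0,i+1) for i ∈ Γ₁ and closure under: D(y,x,z) ∧ D(z,x,z₁) → D(y,x+1,z₁). If there exist n_k, ..., n_0 with D(0,0,n_k), D(0,n_k,n_{k-1}), ..., D(0,n_1,n_0), then n_0 = 2_k^1 and |Γ₁| ≥ 2_k^1. -/
/-- `hyperexp1 k = 2_k^1`: `hyperexp1 0 = 1`, `hyperexp1 (k+1) = 2 ^ hyperexp1 k`. -/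
def hyperexp1 : ℕ → ℕ
  | 0 => 1
  | k + 1 => 2 ^ hyperexp1 k

lemma D_key {Γ₁ : Finset ℕ} {n m l : ℕ} (h : D Γ₁ n m l) :
    l = n + 2 ^ m ∧ ∀ i, n ≤ i → i < n + 2 ^ m → i ∈ Γ₁ := by
  induction h with
  | @base j hj =>
    refine ⟨by simp, fun i h1 h2 => ?_⟩
    simp only [pow_zero] at h2
    obtain rfl : j = i := by omega
    exact hj
  | @step y x z z₁ h1 h2 ih1 ih2 =>
    obtain ⟨e1, m1⟩ := ih1
    obtain ⟨e2, m2⟩ := ih2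
    subst e1
    constructor
    · rw [e2, pow_succ]; ring
    · intro i hi1 hi2
      rw [pow_succ] at hi2
      by_cases hc : i < y + 2 ^ x
      · exact m1 i hi1 hc
      · exact m2 i (by omega) (by omega)

lemma D_key_base {Γ₁ : Finset ℕ} {i : ℕ} (hi : i ∈ Γ₁) : i ∈ Γ₁ := hi

/-- Hyperexponential lower bound: if the chain `D(0,0,n_k), D(0,n_k,n_{k-1}), …,
D(0,n_1,n_0)` is derivable, then `n_0 = 2_k^1` and `|Γ₁| ≥ 2_k^1`. -/
theorem herbrand_lower_bound {Γ₁ : Finset ℕ} {k : ℕ} (ns : ℕ → ℕ)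
    (htop : D Γ₁ 0 0 (ns k))
    (hchain : ∀ j, j < k → D Γ₁ 0 (ns (j + 1)) (ns j)) :
    ns 0 = hyperexp1 k ∧ hyperexp1 k ≤ Γ₁.card := by
  have key : ∀ j, j ≤ k → ns (k - j) = hyperexp1 j := by
    intro j hj
    induction j with
    | zero => simpa [hyperexp1] using (D_key htop).1
    | succ j ih =>
      have hj' : j ≤ k := Nat.le_of_succ_le hj
      have hlt : k - (j + 1) < k := by omega
      have hd := hchain (k - (j+1)) hlt
      have : k - (j+1) + 1 = k - j := by omega
      rw [this, ih hj'] at hd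
      have := (D_key hd).1
      simpa [hyperexp1] using this
  have hns0 : ns 0 = hyperexp1 k := by simpa using key k le_rfl
  refine ⟨hns0, ?_⟩
  -- get the subset fact
  have hsub : Finset.range (hyperexp1 k) ⊆ Γ₁ := by
    rcases Nat.eq_zero_or_pos k with rfl | hk
    · intro i hi
      simp [hyperexp1] at hi
      subst hi
      have := (D_key htop).2 0 le_rfl (by simp)
      exact this
    · have hd := hchain 0 hk
      have h1 : ns 1 = hyperexp1 (k - 1) := by
        have := key (k-1) (by omega)
        rwa [show k - (k-1) = 1 by omega] at this
      have := (D_key hd).2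
      intro i hi
      rw [Finset.mem_range] at hi
      refine this i (Nat.zero_le _) ?_
      rw [h1]
      have : hyperexp1 k = 2 ^ hyperexp1 (k - 1) := by
        conv_lhs => rw [show k = (k-1)+1 by omega]
        rfl
      omega
  calc hyperexp1 k = (Finset.range (hyperexp1 k)).card := by simp
    _ ≤ Γ₁.card := Finset.card_le_card hsub
end

section
/- For every valid Herbrand sequent Γ ⟹ Δ of Ψ ⟹ ∃z̄ A(z̄), where every formula in Γ is a Horn formula and Δ = A(t̄₁), ..., A(t̄ₙ), there exists an index i such that Γ ⟹ A(t̄ᵢ) is already valid. (Minimal model argument for Horn theories.) -/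
/-- A definite propositional Horn clause over atoms `α`: premises and a conclusion atom. -/
structure HornClause (α : Type*) where
  prem : Finset α
  concl : α

/-- A valuation satisfies a Horn clause. -/
def HornClause.Sat {α : Type*} (v : α → Prop) (c : HornClause α) : Prop :=
  (∀ p ∈ c.prem, v p) → v c.concl

/-- Minimal model argument for Horn theories: if a sequent `Γ ⟹ A(t̄₁), …, A(t̄ₙ)` is
valid, where `Γ` consists of Horn clauses and each `A(t̄ᵢ)` is a conjunction of atoms,
then already `Γ ⟹ A(t̄ᵢ)` is valid for some `i`. -/
theorem minimal_herbrand_sequent {α : Type*} (Γ : Set (HornClause α)) {n : ℕ}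
    (A : Fin n → Finset α)
    (hvalid : ∀ v : α → Prop, (∀ c ∈ Γ, HornClause.Sat v c) →
      ∃ i, ∀ p ∈ A i, v p) :
    ∃ i, ∀ v : α → Prop, (∀ c ∈ Γ, HornClause.Sat v c) → ∀ p ∈ A i, v p := by
  -- minimal model: an atom is true iff it holds in every model of Γ
  set v0 : α → Prop := fun p => ∀ v : α → Prop, (∀ c ∈ Γ, HornClause.Sat v c) → v p with hv0
  have hmodel : ∀ c ∈ Γ, HornClause.Sat v0 c := by
    intro c hc hprem v hv
    exact hv c hc (fun p hp => hprem p hp v hv)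
  obtain ⟨i, hi⟩ := hvalid v0 hmodel
  exact ⟨i, fun v hv p hp => hi p hp v hv⟩
end

section
/- For every valid sequent Γ₁, Γ₂ ⟹ R(n̄, S(m̄), l̄) where Γ₁ consists of instances of R(x,0,S(x)) and Γ₂ of instances of (R(y,x,z) ∧ R(z,x,z₁)) → R(y,S(x),z₁) over numerals, Γ₂ must contain an instance of the form (R(n̄,m̄,k̄) ∧ R(k̄,m̄,l̄)) → R(n̄,S(m̄),l̄) such that both Γ₁, Γ₂ ⟹ R(n̄,m̄,k̄) and Γ₁, Γ₂ ⟹ R(k̄,m̄,l̄) are valid. -/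
/-- A ternary relation `S` on ℕ satisfies the hypotheses: all `Hyp₁`-instances
`R(i,0,i+1)` for `i ∈ Γ₁`, and all `Hyp₂`-instances `(R(y,x,z) ∧ R(z,x,z₁)) → R(y,S(x),z₁)`
for `(y,x,z,z₁) ∈ Γ₂`. -/
def SatHyps (Γ₁ : Finset ℕ) (Γ₂ : Finset (ℕ × ℕ × ℕ × ℕ)) (S : ℕ → ℕ → ℕ → Prop) : Prop :=
  (∀ i ∈ Γ₁, S i 0 (i + 1)) ∧
    ∀ q ∈ Γ₂, S q.1 q.2.1 q.2.2.1 → S q.2.2.1 q.2.1 q.2.2.2 → S q.1 (q.2.1 + 1) q.2.2.2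

/-- Validity of the sequent `Γ₁, Γ₂ ⟹ R(n,m,l)`. -/
def ValidSeq (Γ₁ : Finset ℕ) (Γ₂ : Finset (ℕ × ℕ × ℕ × ℕ)) (n m l : ℕ) : Prop :=
  ∀ S : ℕ → ℕ → ℕ → Prop, SatHyps Γ₁ Γ₂ S → S n m l

/-- Case analysis step of the lower-bound lemma: a valid sequent with conclusion
`R(n̄, S(m̄), l̄)` must owe its validity to an implication instance in `Γ₂` of the form
`(R(n̄,m̄,k̄) ∧ R(k̄,m̄,l̄)) → R(n̄,S(m̄),l̄)` whose two premises are themselves valid. -/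
theorem valid_sequent_case_analysis (Γ₁ : Finset ℕ) (Γ₂ : Finset (ℕ × ℕ × ℕ × ℕ))
    (n m l : ℕ) (h : ValidSeq Γ₁ Γ₂ n (m + 1) l) :
    ∃ k, (n, m, k, l) ∈ Γ₂ ∧ ValidSeq Γ₁ Γ₂ n m k ∧ ValidSeq Γ₁ Γ₂ k m l := by
  by_contra hno
  push_neg at hno
  set S : ℕ → ℕ → ℕ → Prop :=
    fun a b c => ValidSeq Γ₁ Γ₂ a b c ∧ ¬(a = n ∧ b = m + 1 ∧ c = l) with hS
  have hsat : SatHyps Γ₁ Γ₂ S := by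
    constructor
    · intro i hi
      refine ⟨fun T hT => hT.1 i hi, ?_⟩
      rintro ⟨-, h0, -⟩
      exact Nat.succ_ne_zero m h0.symm
    · rintro ⟨y, x, z, z₁⟩ hq ⟨hv1, -⟩ ⟨hv2, -⟩
      refine ⟨fun T hT => hT.2 _ hq (hv1 T hT) (hv2 T hT), ?_⟩
      rintro ⟨rfl, hx, rfl⟩
      have hx' : x = m := Nat.succ_injective hx
      subst hx'
      exact (hno z hq hv1) hv2
  exact (h S hsat).2 ⟨rfl, rfl, rfl⟩
end
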